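/- The Exact Cover instance (S, A) has a solution if and only if the persuasion instance constructed by the reduction has a solution R ⊆ F with π*(E ∩ ⋂R)/π*(⋂R) ≥ τ. -/

import Mathlib

inductive World (n k : ℕ) : Type where
  | W : World n k
  | X : World n k
  | Y : Fin k → Fin n → World n k
  | Z : Fin n → World n k
  deriving DecidableEq, Fintype

/-- The event `F_i`: excludes `Y i l` and `Z l` for every `l ∈ A i`. -/
def Fev {n k : ℕ} (A : Fin k → Finset (Fin n)) (i : Fin k) : Set (World n k) :=
  {w | match w with
       | .Y j l => ¬ (j = i ∧ l ∈ A i)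
       | .Z l => l ∉ A i
       | _ => True}

open scoped Classical in
/-- Number of (valid) `Y`-variables belonging to a set of worlds. -/
noncomputable def Ycount {n k : ℕ} (A : Fin k → Finset (Fin n))
    (T : Set (World n k)) : ℕ :=
  (Finset.univ.filter
    (fun p : Fin k × Fin n => p.2 ∈ A p.1 ∧ World.Y p.1 p.2 ∈ T)).card

open scoped Classical in
/-- Number of `Z`-variables belonging to a set of worlds. -/
noncomputable def Zcount {n k : ℕ} (T : Set (World n k)) : ℕ :=
  (Finset.univ.filter (fun l : Fin n => World.Z l ∈ T)).card

/-- The probability function of the reduction (`x = 1/3`). -/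
noncomputable def prob {n k : ℕ} (A : Fin k → Finset (Fin n)) (y z : ℝ) :
    World n k → ℝ
  | .W => 1/3
  | .X => 1/3
  | .Y i l => if l ∈ A i then y else 0
  | .Z _ => z

/-- The additive extension of a probability function to sets of worlds. -/
noncomputable def pstar {n k : ℕ} (π : World n k → ℝ) (S : Set (World n k)) : ℝ :=
  ∑ w : World n k, Set.indicator S π w

/-- The goal event `E = {W₀} ∪ Y`. -/
def goal {n k : ℕ} : Set (World n k) :=
  {w | w = World.W ∨ ∃ (i : Fin k) (l : Fin n), w = World.Y i l}

/- ## Auxiliary lemmas -/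

def worldEquiv (n k : ℕ) : World n k ≃ (Bool ⊕ (Fin k × Fin n) ⊕ Fin n) where
  toFun w := match w with
    | .W => .inl true
    | .X => .inl false
    | .Y i l => .inr (.inl (i, l))
    | .Z l => .inr (.inr l)
  invFun x := match x with
    | .inl true => .W
    | .inl false => .X
    | .inr (.inl (i, l)) => .Y i l
    | .inr (.inr l) => .Z l
  left_inv w := by cases w <;> rfl
  right_inv x := by rcases x with (_|_) | (⟨i,l⟩|l) <;> rfl

open Finset in
lemma sum_ite_card {α : Type*} [Fintype α] (P : α → Prop) [DecidablePred P] (y : ℝ) :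
    ∑ x : α, (if P x then y else 0) = ((univ.filter P).card : ℝ) * y := by
  rw [← Finset.sum_filter, Finset.sum_const, nsmul_eq_mul]

open scoped Classical in
lemma pstar_eval {n k : ℕ} (A : Fin k → Finset (Fin n)) (y z : ℝ) (T : Set (World n k)) :
    pstar (prob A y z) T =
      (if World.W ∈ T then (1/3:ℝ) else 0) + (if World.X ∈ T then (1/3:ℝ) else 0)
      + (Ycount A T : ℝ) * y + (Zcount T : ℝ) * z := by
  unfold pstar
  rw [← Equiv.sum_comp (worldEquiv n k).symm (fun w => Set.indicator T (prob A y z) w)]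
  rw [Fintype.sum_sum_type, Fintype.sum_sum_type, Fintype.sum_bool, Fintype.sum_prod_type]
  simp only [worldEquiv, Equiv.coe_fn_symm_mk, Equiv.coe_fn_mk, Set.indicator_apply, prob]
  have hY : (Ycount A T : ℝ) * y = ∑ i : Fin k, ∑ l : Fin n,
      (if World.Y i l ∈ T then (if l ∈ A i then y else 0) else 0) := by
    rw [Ycount, ← sum_ite_card (fun p : Fin k × Fin n => p.2 ∈ A p.1 ∧ World.Y p.1 p.2 ∈ T) y,
      Fintype.sum_prod_type]
    refine Finset.sum_congr rfl fun i _ => Finset.sum_congr rfl fun l _ => ?_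
    split_ifs <;> tauto
  have hZ : (Zcount T : ℝ) * z = ∑ l : Fin n, (if World.Z l ∈ T then z else 0) := by
    rw [Zcount, ← sum_ite_card (fun l : Fin n => World.Z l ∈ T) z]
  rw [hY, hZ]
  ring

section mems
variable {n k : ℕ} {A : Fin k → Finset (Fin n)} {R : Set (Fin k)}

lemma memFev_W {i : Fin k} : World.W ∈ Fev A i := trivial
lemma memFev_X {i : Fin k} : World.X ∈ Fev A i := trivial
lemma memFev_Y {i j : Fin k} {l : Fin n} :
    World.Y j l ∈ Fev A i ↔ ¬(j = i ∧ l ∈ A i) := Iff.rfl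
lemma memFev_Z {i : Fin k} {l : Fin n} : World.Z l ∈ Fev A i ↔ l ∉ A i := Iff.rfl

lemma W_mem_inter : World.W ∈ ⋂ i ∈ R, Fev A i :=
  Set.mem_iInter₂.2 fun _ _ => memFev_W
lemma X_mem_inter : World.X ∈ ⋂ i ∈ R, Fev A i :=
  Set.mem_iInter₂.2 fun _ _ => memFev_X
lemma Y_mem_inter {j : Fin k} {l : Fin n} (hl : l ∈ A j) :
    World.Y j l ∈ ⋂ i ∈ R, Fev A i ↔ j ∉ R := by
  rw [Set.mem_iInter₂]
  constructor
  · intro h hj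
    exact (h j hj) ⟨rfl, hl⟩
  · intro hj i hi
    rw [memFev_Y]
    rintro ⟨rfl, -⟩
    exact hj hi
lemma Z_mem_inter {l : Fin n} :
    World.Z l ∈ ⋂ i ∈ R, Fev A i ↔ ∀ i ∈ R, l ∉ A i := by
  rw [Set.mem_iInter₂]
  exact forall₂_congr fun i hi => memFev_Z

lemma W_mem_goal : World.W ∈ (goal : Set (World n k)) := Or.inl rfl
lemma X_not_mem_goal : World.X ∉ (goal : Set (World n k)) := by simp [goal]
lemma Y_mem_goal {j : Fin k} {l : Fin n} : World.Y j l ∈ (goal : Set (World n k)) :=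
  Or.inr ⟨j, l, rfl⟩
lemma Z_not_mem_goal {l : Fin n} : World.Z l ∉ (goal : Set (World n k)) := by simp [goal]

open scoped Classical in
lemma Ycount_inter (A : Fin k → Finset (Fin n)) (R : Set (Fin k)) :
    Ycount A (⋂ i ∈ R, Fev A i) =
      ∑ j ∈ Finset.univ.filter (fun j => j ∉ R), (A j).card := by
  rw [Ycount, Finset.card_filter, Fintype.sum_prod_type, Finset.sum_filter]
  refine Finset.sum_congr rfl fun j _ => ?_
  by_cases hj : j ∈ R
  · simp only [hj, not_true_eq_false, if_false]
    refine Finset.sum_eq_zero fun l _ => ?_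
    rw [if_neg]
    rintro ⟨hl, hmem⟩
    exact ((Y_mem_inter hl).1 hmem) hj
  · simp only [hj, not_false_eq_true, if_true]
    have key : ∀ l : Fin n, (l ∈ A j ∧ World.Y j l ∈ ⋂ i ∈ R, Fev A i) ↔ l ∈ A j := fun l =>
      ⟨fun h => h.1, fun hl => ⟨hl, (Y_mem_inter hl).2 hj⟩⟩
    calc ∑ l : Fin n, (if l ∈ A j ∧ World.Y j l ∈ ⋂ i ∈ R, Fev A i then 1 else 0)
        = ∑ l : Fin n, (if l ∈ A j then 1 else 0) :=
          Finset.sum_congr rfl fun l _ => if_congr (key l) rfl rfl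
      _ = (Finset.univ.filter (fun l => l ∈ A j)).card := (Finset.card_filter _ _).symm
      _ = (A j).card := by rw [Finset.filter_univ_mem]

open scoped Classical in
lemma Ycount_goal_inter (A : Fin k → Finset (Fin n)) (R : Set (Fin k)) :
    Ycount A (goal ∩ ⋂ i ∈ R, Fev A i) = Ycount A (⋂ i ∈ R, Fev A i) := by
  unfold Ycount
  congr 1
  ext p
  simp only [Finset.mem_filter, Set.mem_inter_iff]
  exact and_congr_right fun _ => and_congr_right fun _ => and_iff_right Y_mem_goal

open scoped Classical in
lemma Zcount_inter (A : Fin k → Finset (Fin n)) (R : Set (Fin k)) :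
    Zcount (⋂ i ∈ R, Fev A i) =
      (Finset.univ.filter (fun l : Fin n => ∀ i ∈ R, l ∉ A i)).card := by
  unfold Zcount
  congr 1
  ext l
  simp only [Finset.mem_filter]
  exact and_congr_right fun _ => Z_mem_inter

open scoped Classical in
lemma Zcount_goal_inter (A : Fin k → Finset (Fin n)) (R : Set (Fin k)) :
    Zcount (goal ∩ ⋂ i ∈ R, Fev A i) = 0 := by
  unfold Zcount
  convert Finset.card_empty
  ext l
  simp only [Finset.mem_filter, Finset.notMem_empty, iff_false, not_and]
  intro _ hl
  rw [Set.mem_inter_iff] at hl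
  exact Z_not_mem_goal hl.1

open scoped Classical in
lemma filter_exists_eq_biUnion (A : Fin k → Finset (Fin n)) (R : Set (Fin k)) :
    Finset.univ.filter (fun l : Fin n => ∃ i ∈ R, l ∈ A i)
      = (Finset.univ.filter (fun j => j ∈ R)).biUnion A := by
  ext l
  simp

end mems

lemma key_arith (m n a b u v : ℕ) (y : ℝ) (hy : 0 < y) (hab : a + b = m) (huv : u + v = n)
    (hua : u ≤ a) (hnm : n ≤ m) (hn1 : 1 ≤ n) :
    ((1/3 + ((m-n:ℕ):ℝ)*y) / (2/3 + ((m-n:ℕ):ℝ)*y) ≤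
      (1/3 + (b:ℝ)*y) / (2/3 + (b:ℝ)*y + (v:ℝ)*(2*(m:ℝ)*y))) ↔ (v = 0 ∧ a = n) := by
  have hc : ((m-n:ℕ):ℝ) = (m:ℝ) - n := by rw [Nat.cast_sub hnm]
  have hb : (b:ℝ) = (m:ℝ) - a := by
    have : (a:ℝ) + b = m := by exact_mod_cast congrArg (Nat.cast : ℕ → ℝ) hab
    linarith
  have hna : (n:ℝ) - a ≤ v := by
    have h1 : (u:ℝ) + v = n := by exact_mod_cast congrArg (Nat.cast : ℕ → ℝ) huv
    have h2 : (u:ℝ) ≤ a := by exact_mod_cast hua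
    linarith
  have hm1 : (1:ℝ) ≤ m := by
    have : (1:ℕ) ≤ m := le_trans hn1 hnm
    exact_mod_cast this
  have hcy : 0 ≤ ((m:ℝ) - n) * y := by
    apply mul_nonneg _ hy.le
    have : (n:ℝ) ≤ m := by exact_mod_cast hnm
    linarith
  have hd1 : (0:ℝ) < 2/3 + ((m-n:ℕ):ℝ)*y := by rw [hc]; linarith
  have hd2 : (0:ℝ) < 2/3 + (b:ℝ)*y + (v:ℝ)*(2*(m:ℝ)*y) := by
    have h1 : 0 ≤ (b:ℝ)*y := mul_nonneg (Nat.cast_nonneg b) hy.le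
    have h2 : 0 ≤ (v:ℝ)*(2*(m:ℝ)*y) := by positivity
    linarith
  rw [div_le_div_iff₀ hd1 hd2, hc, hb]
  constructor
  · intro h
    have h3 : 0 ≤ (v:ℝ)*y := mul_nonneg (Nat.cast_nonneg v) hy.le
    have hv : v = 0 := by
      by_contra hv
      have hv1 : (1:ℝ) ≤ v := by
        have : 1 ≤ v := Nat.one_le_iff_ne_zero.2 hv
        exact_mod_cast this
      have h1 : ((n:ℝ)-a)*y ≤ (v:ℝ)*y := mul_le_mul_of_nonneg_right hna hy.le
      have h2 : 1*y ≤ (v:ℝ)*y := mul_le_mul_of_nonneg_right hv1 hy.le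
      have h4 : 1*((v:ℝ)*y) ≤ (m:ℝ)*((v:ℝ)*y) := mul_le_mul_of_nonneg_right hm1 h3
      have h5 : 0 ≤ ((v:ℝ)*y)*(((m:ℝ)-n)*y) := mul_nonneg h3 hcy
      have h6 : 0 ≤ (((v:ℝ)*y)*(((m:ℝ)-n)*y))*(m:ℝ) :=
        mul_nonneg h5 (by linarith)
      nlinarith [h1, h2, h4, h5, h6, hy]
    refine ⟨hv, ?_⟩
    have hv0 : (v:ℝ) = 0 := by exact_mod_cast hv
    rw [hv0] at h
    have hba : ((m:ℝ)-n)*y ≤ ((m:ℝ)-a)*y := by nlinarith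
    have := (mul_le_mul_iff_of_pos_right hy).1 hba
    have han : (a:ℝ) ≤ n := by linarith
    have han2 : (n:ℝ) ≤ a := by
      have hv' : (n:ℝ) - a ≤ 0 := by rw [hv0] at hna; linarith
      linarith
    have : (a:ℝ) = n := le_antisymm han han2
    exact_mod_cast this
  · rintro ⟨hv, ha⟩
    have hv0 : (v:ℝ) = 0 := by exact_mod_cast hv
    have ha0 : (a:ℝ) = n := by exact_mod_cast ha
    rw [hv0, ha0]
    apply le_of_eq
    ring

lemma pairwise_of_card {ι α : Type*} [DecidableEq α] [DecidableEq ι] (s : Finset ι)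
    (f : ι → Finset α) (h : ∑ i ∈ s, (f i).card ≤ (s.biUnion f).card) :
    ∀ i ∈ s, ∀ j ∈ s, i ≠ j → Disjoint (f i) (f j) := by
  intro i hi j hj hij
  by_contra hd
  obtain ⟨x, hxi, hxj⟩ := Finset.not_disjoint_iff.1 hd
  have hsub : s.biUnion f ⊆ ((s.erase j).biUnion f) ∪ ((f j).erase x) := by
    intro w hw
    obtain ⟨t, ht, hwt⟩ := Finset.mem_biUnion.1 hw
    by_cases htj : t = j
    · subst htj
      by_cases hwx : w = x
      · subst hwx
        exact Finset.mem_union.2 (Or.inl (Finset.mem_biUnion.2 ⟨i, Finset.mem_erase.2 ⟨hij, hi⟩, hxi⟩))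
      · exact Finset.mem_union.2 (Or.inr (Finset.mem_erase.2 ⟨hwx, hwt⟩))
    · exact Finset.mem_union.2 (Or.inl (Finset.mem_biUnion.2 ⟨t, Finset.mem_erase.2 ⟨htj, ht⟩, hwt⟩))
  have h1 : (s.biUnion f).card ≤ ∑ i ∈ s.erase j, (f i).card + ((f j).card - 1) := by
    calc (s.biUnion f).card ≤ (((s.erase j).biUnion f) ∪ ((f j).erase x)).card :=
          Finset.card_le_card hsub
      _ ≤ ((s.erase j).biUnion f).card + ((f j).erase x).card := Finset.card_union_le _ _
      _ ≤ ∑ i ∈ s.erase j, (f i).card + ((f j).card - 1) := by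
          gcongr
          · exact Finset.card_biUnion_le
          · rw [Finset.card_erase_of_mem hxj]
  have h2 : ∑ i ∈ s.erase j, (f i).card + (f j).card = ∑ i ∈ s, (f i).card :=
    Finset.sum_erase_add s _ hj
  have h3 : 1 ≤ (f j).card := Finset.card_pos.2 ⟨x, hxj⟩
  omega

open scoped Classical in
lemma ratio_iff (n k : ℕ) (hn : 1 ≤ n) (A : Fin k → Finset (Fin n))
    (m : ℕ) (hnm : n ≤ m) (hm : m = ∑ i : Fin k, (A i).card)
    (y τ : ℝ) (hy0 : 0 < y)
    (hτ : τ = (1/3 + ((m - n : ℕ) : ℝ)*y) / (2/3 + ((m - n : ℕ) : ℝ)*y))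
    (R : Set (Fin k)) :
    (τ ≤ pstar (prob A y (2*m*y)) (goal ∩ ⋂ i ∈ R, Fev A i) /
          pstar (prob A y (2*m*y)) (⋂ i ∈ R, Fev A i)) ↔
      ((Finset.univ.filter (fun l : Fin n => ∀ i ∈ R, l ∉ A i)).card = 0 ∧
        ∑ j ∈ Finset.univ.filter (fun j => j ∈ R), (A j).card = n) := by
  set a := ∑ j ∈ Finset.univ.filter (fun j => j ∈ R), (A j).card with ha
  set b := ∑ j ∈ Finset.univ.filter (fun j => j ∉ R), (A j).card with hb
  set u := (Finset.univ.filter (fun l : Fin n => ∃ i ∈ R, l ∈ A i)).card with hu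
  set v := (Finset.univ.filter (fun l : Fin n => ∀ i ∈ R, l ∉ A i)).card with hv
  have hab : a + b = m := by
    rw [ha, hb, hm]
    exact Finset.sum_filter_add_sum_filter_not _ _ _
  have huv : u + v = n := by
    rw [hu, hv]
    have heq : Finset.univ.filter (fun l : Fin n => ∀ i ∈ R, l ∉ A i)
        = Finset.univ.filter (fun l : Fin n => ¬ ∃ i ∈ R, l ∈ A i) := by
      ext l
      simp
    rw [heq, Finset.card_filter_add_card_filter_not, Finset.card_univ, Fintype.card_fin]
  have hua : u ≤ a := by
    rw [hu, filter_exists_eq_biUnion, ha]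
    exact Finset.card_biUnion_le
  have hnum : pstar (prob A y (2*m*y)) (goal ∩ ⋂ i ∈ R, Fev A i) = 1/3 + (b:ℝ)*y := by
    rw [pstar_eval, Ycount_goal_inter, Ycount_inter, Zcount_goal_inter,
      if_pos (Set.mem_inter W_mem_goal W_mem_inter),
      if_neg (fun h => X_not_mem_goal h.1)]
    rw [← hb, Nat.cast_zero]
    ring
  have hden : pstar (prob A y (2*m*y)) (⋂ i ∈ R, Fev A i)
      = 2/3 + (b:ℝ)*y + (v:ℝ)*(2*(m:ℝ)*y) := by
    rw [pstar_eval, Ycount_inter, Zcount_inter, if_pos W_mem_inter, if_pos X_mem_inter]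
    rw [← hb, ← hv]
    ring
  rw [hnum, hden, hτ]
  exact key_arith m n a b u v y hy0 hab huv hua hnm hn

theorem stmt_15 (n k : ℕ) (hn : 1 ≤ n) (A : Fin k → Finset (Fin n))
    (hcov : ∀ l : Fin n, ∃ i : Fin k, l ∈ A i)
    (hne : ∀ i : Fin k, (A i).Nonempty)
    (hinj : Function.Injective A)
    (m : ℕ) (hm : m = ∑ i : Fin k, (A i).card)
    (y τ : ℝ)
    (hy : y = (1/3 : ℝ) / (m * (1 + 2*n)))
    (hτ : τ = (1/3 + ((m - n : ℕ) : ℝ)*y) / (2/3 + ((m - n : ℕ) : ℝ)*y)) :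
    (∃ H : Set (Fin k),
        (∀ i ∈ H, ∀ j ∈ H, i ≠ j → Disjoint (A i) (A j)) ∧
        (∀ l : Fin n, ∃ i ∈ H, l ∈ A i)) ↔
      (∃ R : Set (Fin k),
        τ ≤ pstar (prob A y (2*m*y)) (goal ∩ ⋂ i ∈ R, Fev A i) /
          pstar (prob A y (2*m*y)) (⋂ i ∈ R, Fev A i)) := by
  classical
  have hnm : n ≤ m := by
    have hsub : (Finset.univ : Finset (Fin n)) ⊆ Finset.univ.biUnion A := by
      intro l _
      obtain ⟨i, hi⟩ := hcov l
      exact Finset.mem_biUnion.2 ⟨i, Finset.mem_univ i, hi⟩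
    have h1 : (Finset.univ : Finset (Fin n)).card ≤ (Finset.univ.biUnion A).card :=
      Finset.card_le_card hsub
    have h2 : (Finset.univ.biUnion A).card ≤ ∑ i : Fin k, (A i).card :=
      Finset.card_biUnion_le
    rw [Finset.card_univ, Fintype.card_fin] at h1
    omega
  have hm1 : 1 ≤ m := le_trans hn hnm
  have hy0 : 0 < y := by
    rw [hy]
    apply div_pos (by norm_num)
    have hm0 : (0:ℝ) < m := by exact_mod_cast hm1
    have : (0:ℝ) < 1 + 2*(n:ℝ) := by positivity
    exact mul_pos hm0 this
  constructor
  · rintro ⟨H, hdisj, hHcov⟩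
    refine ⟨H, (ratio_iff n k hn A m hnm hm y τ hy0 hτ H).2 ?_⟩
    have hufull : Finset.univ.filter (fun l : Fin n => ∃ i ∈ H, l ∈ A i) = Finset.univ := by
      refine Finset.eq_univ_of_forall fun l => ?_
      rw [Finset.mem_filter]
      exact ⟨Finset.mem_univ l, hHcov l⟩
    have hu : (Finset.univ.filter (fun l : Fin n => ∃ i ∈ H, l ∈ A i)).card = n := by
      rw [hufull, Finset.card_univ, Fintype.card_fin]
    have hv : (Finset.univ.filter (fun l : Fin n => ∀ i ∈ H, l ∉ A i)).card = 0 := by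
      rw [Finset.card_eq_zero, Finset.eq_empty_iff_forall_notMem]
      intro l hl
      rw [Finset.mem_filter] at hl
      obtain ⟨i, hiH, hli⟩ := hHcov l
      exact hl.2 i hiH hli
    refine ⟨hv, ?_⟩
    have hdisj' : ∀ i ∈ Finset.univ.filter (fun j => j ∈ H), ∀ j ∈ Finset.univ.filter (fun j => j ∈ H),
        i ≠ j → Disjoint (A i) (A j) := by
      intro i hi j hj hij
      rw [Finset.mem_filter] at hi hj
      exact hdisj i hi.2 j hj.2 hij
    rw [← Finset.card_biUnion hdisj', ← filter_exists_eq_biUnion, hu]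
  · rintro ⟨R, hR⟩
    obtain ⟨hv, haa⟩ := (ratio_iff n k hn A m hnm hm y τ hy0 hτ R).1 hR
    have huv : (Finset.univ.filter (fun l : Fin n => ∃ i ∈ R, l ∈ A i)).card = n := by
      have heq : Finset.univ.filter (fun l : Fin n => ∀ i ∈ R, l ∉ A i)
          = Finset.univ.filter (fun l : Fin n => ¬ ∃ i ∈ R, l ∈ A i) := by
        ext l
        simp
      have := Finset.card_filter_add_card_filter_not
        (s := (Finset.univ : Finset (Fin n))) (p := fun l : Fin n => ∃ i ∈ R, l ∈ A i)
      rw [Finset.card_univ, Fintype.card_fin] at this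
      rw [heq] at hv
      omega
    refine ⟨R, ?_, ?_⟩
    · have hle : ∑ j ∈ Finset.univ.filter (fun j => j ∈ R), (A j).card
          ≤ ((Finset.univ.filter (fun j => j ∈ R)).biUnion A).card := by
        rw [← filter_exists_eq_biUnion, huv, haa]
      intro i hi j hj hij
      exact pairwise_of_card _ A hle i (Finset.mem_filter.2 ⟨Finset.mem_univ i, hi⟩)
        j (Finset.mem_filter.2 ⟨Finset.mem_univ j, hj⟩) hij
    · intro l
      have hfull : Finset.univ.filter (fun l : Fin n => ∃ i ∈ R, l ∈ A i) = Finset.univ := by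
        apply Finset.eq_univ_of_card
        rw [huv, Fintype.card_fin]
      have : l ∈ Finset.univ.filter (fun l : Fin n => ∃ i ∈ R, l ∈ A i) := by
        rw [hfull]; exact Finset.mem_univ l
      exact (Finset.mem_filter.1 this).2
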